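/- arXiv:1710.00485 — 2 statements merged into one kernel-verified Lean document; each statement's English description precedes it below -/
import Mathlib

section
/- Let 𝔫 be a Lie algebra over a field of characteristic zero with lower central series L¹𝔫 = 𝔫, Lʳ⁺¹𝔫 = [𝔫, Lʳ𝔫]. Suppose 𝔫 also carries a decreasing filtration W₋₁𝔫 ⊇ W₋₂𝔫 ⊇ ⋯ with W₋₁𝔫 = 𝔫, [W₋ᵢ𝔫, W₋ⱼ𝔫] ⊆ W₋ᵢ₋ⱼ𝔫, such that for each r the quotient Lʳ𝔫 / Lʳ⁺¹𝔫 injects into W₋ᵣ𝔫 / W₋ᵣ₋₁𝔫 (i.e., Lʳ𝔫 ∩ W₋ᵣ₋₁𝔫 ⊆ Lʳ⁺¹𝔫) and W₋₂𝔫 = L²𝔫. Then W₋ᵣ𝔫 = Lʳ𝔫 for all r ≥ 1. -/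
/-- If a Lie algebra `𝔫` over a field of characteristic zero carries a decreasing
multiplicative filtration `W` with `W₋₁𝔫 = 𝔫`, such that each `Lʳ𝔫 / Lʳ⁺¹𝔫` injects into
`W₋ᵣ𝔫 / W₋ᵣ₋₁𝔫` and `W₋₂𝔫 = L²𝔫`, then the filtration agrees with the lower central
series: `W₋ᵣ𝔫 = Lʳ𝔫` for all `r ≥ 1`.  (Here `Lʳ𝔫 = LieModule.lowerCentralSeries F 𝔫 𝔫 (r-1)`.) -/
theorem stmt_5 {F 𝔫 : Type*} [Field F] [CharZero F] [LieRing 𝔫] [LieAlgebra F 𝔫]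
    (W : ℕ → LieIdeal F 𝔫)
    (hW1 : W 1 = ⊤)
    (hdec : ∀ r : ℕ, W (r + 1) ≤ W r)
    (hmul : ∀ i j : ℕ, 1 ≤ i → 1 ≤ j → ⁅W i, W j⁆ ≤ W (i + j))
    (hinj : ∀ r : ℕ, 1 ≤ r →
      LieModule.lowerCentralSeries F 𝔫 𝔫 (r - 1) ⊓ W (r + 1) ≤ LieModule.lowerCentralSeries F 𝔫 𝔫 r)
    (hW2 : W 2 = LieModule.lowerCentralSeries F 𝔫 𝔫 1) :
    ∀ r : ℕ, 1 ≤ r → W r = LieModule.lowerCentralSeries F 𝔫 𝔫 (r - 1) := by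
  intro r hr
  induction r with
  | zero => omega
  | succ n ih =>
    rcases Nat.eq_or_lt_of_le hr with h | h
    · simp [← h, hW1]
    · have hn : 1 ≤ n := by omega
      have hWn : W n = LieModule.lowerCentralSeries F 𝔫 𝔫 (n - 1) := ih hn
      apply le_antisymm
      · -- W (n+1) ≤ lcs n
        have h1 : W (n + 1) ≤ LieModule.lowerCentralSeries F 𝔫 𝔫 (n - 1) ⊓ W (n + 1) :=
          le_inf (hWn ▸ hdec n) le_rfl
        simpa using h1.trans (hinj n hn)
      · -- lcs n ≤ W (n+1)
        have h2 : LieModule.lowerCentralSeries F 𝔫 𝔫 n =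
            ⁅(⊤ : LieIdeal F 𝔫), LieModule.lowerCentralSeries F 𝔫 𝔫 (n - 1)⁆ := by
          conv_lhs => rw [show n = (n - 1) + 1 by omega]
          exact LieModule.lowerCentralSeries_succ F 𝔫 𝔫 (n - 1)
        rw [show n + 1 - 1 = n by omega, h2, ← hW1, ← hWn]
        simpa [Nat.add_comm] using hmul 1 n le_rfl hn
end

section
/- Let G be a linear algebraic group over a field F, H a closed subgroup, and Γ a subgroup of G(F) fitting in a commutative diagram with exact rows 1 → Γ₀ → Γ → Q → 1 and 1 → H(F) → G(F) → C(F) where G/H ≅ C, such that Γ₀ maps into H(F) with Zariski-dense image in H, and the image of Q in C(F) is Zariski-dense in C. Then the image of Γ in G(F) is Zariski-dense in G. -/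
/-! The closure `K` of `ρ(Γ)` is a closed subgroup of `G` containing `H`, hence a union of
`H`-cosets. Its image in `G ⧸ H` is therefore closed (its preimage is `K`), and it contains the
dense set `σ(Q)`, so it is all of `G ⧸ H`; since `K` is `H`-saturated, `K = G`. -/

namespace Subgroup

variable {G : Type*} [Group G] [TopologicalSpace G] {H K : Subgroup G} [H.Normal]

theorem isClosed_map_mk'_of_le (hHK : H ≤ K) (hK : IsClosed (K : Set G)) :
    IsClosed (K.map (QuotientGroup.mk' H) : Set (G ⧸ H)) := by
  rw [← (QuotientGroup.isQuotientMap_mk H).isClosed_preimage]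
  change IsClosed (comap (QuotientGroup.mk' H) (K.map (QuotientGroup.mk' H)) : Set G)
  rwa [comap_map_eq_self (by rwa [QuotientGroup.ker_mk'])]

theorem eq_top_of_le_of_dense_map_mk' (hHK : H ≤ K) (hK : IsClosed (K : Set G))
    (hdense : Dense (K.map (QuotientGroup.mk' H) : Set (G ⧸ H))) : K = ⊤ := by
  have hmap : K.map (QuotientGroup.mk' H) = ⊤ :=
    SetLike.coe_injective ((isClosed_map_mk'_of_le hHK hK).closure_eq ▸ hdense.closure_eq)
  rw [← comap_map_eq_self (H := K) (f := QuotientGroup.mk' H) (by rwa [QuotientGroup.ker_mk']),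
    hmap, comap_top]

end Subgroup

theorem stmt_11_general {G Γ₀ Γ Q : Type*} [Group G] [TopologicalSpace G] [IsTopologicalGroup G]
    [Group Γ₀] [Group Γ] [Group Q]
    (H : Subgroup G) [H.Normal]
    (i : Γ₀ →* Γ) (p : Γ →* Q) (hp : Function.Surjective p)
    (ρ : Γ →* G)
    (hdense₀ : closure (Set.range fun x : Γ₀ => ρ (i x)) = (H : Set G))
    (σ : Q →* G ⧸ H)
    (hcomm : ∀ γ : Γ, σ (p γ) = QuotientGroup.mk (ρ γ))
    (hdenseQ : Dense (Set.range σ)) :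
    Dense (Set.range ρ) := by
  set K := ρ.range.topologicalClosure
  have hK : (K : Set G) = closure (Set.range ρ) := by
    rw [Subgroup.topologicalClosure_coe, MonoidHom.coe_range]
  have hHK : H ≤ K := by
    rw [← SetLike.coe_subset_coe, ← hdense₀, hK]
    exact closure_mono (Set.range_comp_subset_range i ρ)
  have hσK : Set.range σ ⊆ K.map (QuotientGroup.mk' H) := by
    rintro _ ⟨q, rfl⟩
    obtain ⟨γ, rfl⟩ := hp q
    exact ⟨ρ γ, ρ.range.le_topologicalClosure ⟨γ, rfl⟩, (hcomm γ).symm⟩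
  have hKtop : K = ⊤ :=
    Subgroup.eq_top_of_le_of_dense_map_mk' hHK ρ.range.isClosed_topologicalClosure
      (hdenseQ.mono hσK)
  rw [dense_iff_closure_eq, ← hK, hKtop, Subgroup.coe_top]

/-- Density argument: let `G` be a (Zariski-)topological group with normal closed subgroup
`H` and quotient `C = G/H`, and let `1 → Γ₀ → Γ → Q → 1` be an exact sequence of groups
mapping into `H ≤ G → G/H` compatibly.  If the image of `Γ₀` is dense in `H` and the image
of `Q` is dense in `C`, then the image of `Γ` is dense in `G`. -/
theorem stmt_11 {G Γ₀ Γ Q : Type*} [Group G] [TopologicalSpace G] [IsTopologicalGroup G]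
    [Group Γ₀] [Group Γ] [Group Q]
    (H : Subgroup G) [H.Normal] (hHcl : IsClosed (H : Set G))
    (i : Γ₀ →* Γ) (p : Γ →* Q) (hp : Function.Surjective p) (hexact : p.ker = i.range)
    (ρ : Γ →* G)
    (hρ₀ : ∀ x : Γ₀, ρ (i x) ∈ H)
    (hdense₀ : closure (Set.range fun x : Γ₀ => ρ (i x)) = (H : Set G))
    (σ : Q →* G ⧸ H)
    (hcomm : ∀ γ : Γ, σ (p γ) = QuotientGroup.mk (ρ γ))
    (hdenseQ : Dense (Set.range σ)) :
    Dense (Set.range ρ) :=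
  stmt_11_general H i p hp ρ hdense₀ σ hcomm hdenseQ
end
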